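/- In the semigroup S = F ⊔ R, every congruence on S that is contained in Green's relation 𝓛 of S is the equality relation; that is, the largest congruence contained in 𝓛 on S is trivial. -/
import Mathlib


/-- Multiplication `b ↦ b a` in the monoid `F¹ = Option F` (`none` is the
adjoined identity `1`), with the result regarded as an element of `F¹`. -/
def mulOne {F : Type*} [Semigroup F] : Option F → F → Option F
  | none, a => some a
  | some x, a => some (x * a)

/-- The multiplication `∗` on `S = F ⊔ R`, where `R = F¹` carries the right
zero multiplication: `a ∗ a'` is the product in `F`; `b ∗ b' = b'`;
`a ∗ b = b`; and `b ∗ a = ba`, computed in `F¹`. -/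
def smul {F : Type*} [Semigroup F] :
    F ⊕ Option F → F ⊕ Option F → F ⊕ Option F
  | Sum.inl a, Sum.inl a' => Sum.inl (a * a')
  | Sum.inl _, Sum.inr b => Sum.inr b
  | Sum.inr b, Sum.inl a => Sum.inr (mulOne b a)
  | Sum.inr _, Sum.inr b' => Sum.inr b'

/-- Green's relation 𝓛 on `S = F ⊔ R`: `a 𝓛 b` iff `{a} ∪ Sa = {b} ∪ Sb`. -/
def greenL {F : Type*} [Semigroup F] (a b : F ⊕ Option F) : Prop :=
  (insert a {x | ∃ s : F ⊕ Option F, x = smul s a} : Set (F ⊕ Option F)) =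
    insert b {x | ∃ s : F ⊕ Option F, x = smul s b}

/-- Let `F` be a completely regular semigroup. Every congruence on
`S = F ⊔ R` contained in Green's relation 𝓛 is the equality relation. -/
theorem stmt13 {F : Type*} [Semigroup F] (inv : F → F)
    (hcr1 : ∀ a : F, a * inv a * a = a)
    (hcr2 : ∀ a : F, inv (inv a) = a)
    (hcr3 : ∀ a : F, a * inv a = inv a * a)
    (θ : F ⊕ Option F → F ⊕ Option F → Prop)
    (hEquiv : Equivalence θ)
    (hCong : ∀ a b c d : F ⊕ Option F, θ a b → θ c d → θ (smul a c) (smul b d))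
    (hSub : ∀ a b : F ⊕ Option F, θ a b → greenL a b) :
    ∀ a b : F ⊕ Option F, θ a b → a = b := by

  -- Step 1: θ-related elements of R are equal, since the L-class of `inr b` is `{inr b}`.
  have key : ∀ b b' : Option F, θ (Sum.inr b) (Sum.inr b') → b = b' := by
    intro b b' h
    have hg := hSub _ _ h
    unfold greenL at hg
    have h1 : (Sum.inr b : F ⊕ Option F) ∈
        insert (Sum.inr b' : F ⊕ Option F)
          {x | ∃ s : F ⊕ Option F, x = smul s (Sum.inr b')} := by
      rw [← hg]; exact Set.mem_insert _ _
    rcases h1 with h1 | ⟨s, hs⟩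
    · exact Sum.inr.inj h1
    · cases s <;> simp [smul] at hs <;> exact hs
  -- Step 2: no element of F is θ-related to an element of R.
  have mixed : ∀ (x : F) (y : Option F), θ (Sum.inl x) (Sum.inr y) → False := by
    intro x y h
    have hg := hSub _ _ h
    unfold greenL at hg
    have h1 : (Sum.inl x : F ⊕ Option F) ∈
        insert (Sum.inr y : F ⊕ Option F)
          {z | ∃ s : F ⊕ Option F, z = smul s (Sum.inr y)} := by
      rw [← hg]; exact Set.mem_insert _ _
    rcases h1 with h1 | ⟨s, hs⟩
    · exact absurd h1 (by simp)
    · cases s <;> simp [smul] at hs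
  intro a b h
  cases a with
  | inl x =>
    cases b with
    | inl y =>
      have h2 : θ (Sum.inr (some x)) (Sum.inr (some y)) := by
        have := hCong (Sum.inr none) (Sum.inr none) (Sum.inl x) (Sum.inl y)
          (hEquiv.refl _) h
        simpa [smul, mulOne] using this
      have := key _ _ h2
      simp_all
    | inr y => exact absurd h (fun h => mixed x y h)
  | inr x =>
    cases b with
    | inl y => exact absurd (hEquiv.symm h) (fun h => mixed y x h)
    | inr y => exact congrArg Sum.inr (key _ _ h)
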